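/- arXiv:2503.00406 — 8 statements merged into one kernel-verified Lean document; each statement's English description precedes it below -/
import Mathlib

section
/- If G is a graph with finite chromatic number χ(G), then for every positive integer n, the minimum number of colors in a proper Z-labeling of G whose closed neighborhood sums are all ≡ 0 (mod n) equals χ(G). -/
/-!
A proper labeling with finitely many values is a colouring of `G` by its range, so it uses at
least `χ(G)` labels, whatever the closed-neighbourhood condition. Conversely, relabelling an
optimal colouring `V → Fin c` by the distinct multiples `0, n, …, (c - 1) n` keeps it proper and
makes every closed-neighbourhood sum a multiple of `n`.
-/

open SimpleGraph

def ClosedColoring {V : Type*} (G : SimpleGraph V) [G.LocallyFinite]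
    (n k : ℤ) (ℓ : V → ℤ) : Prop :=
  ∀ v : V, (ℓ v + ∑ u ∈ G.neighborFinset v, ℓ u) ≡ k [ZMOD n]

def ProperLabeling {V : Type*} (G : SimpleGraph V) (ℓ : V → ℤ) : Prop :=
  ∀ ⦃v w : V⦄, G.Adj v w → ℓ v ≠ ℓ w

def HasClosedChrom {V : Type*} (G : SimpleGraph V) [G.LocallyFinite]
    (n k : ℤ) (c : ℕ) : Prop :=
  (∃ ℓ : V → ℤ, ProperLabeling G ℓ ∧ ClosedColoring G n k ℓ ∧
      (Set.range ℓ).Finite ∧ (Set.range ℓ).ncard = c) ∧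
  ∀ ℓ : V → ℤ, ProperLabeling G ℓ → ClosedColoring G n k ℓ →
      (Set.range ℓ).Finite → c ≤ (Set.range ℓ).ncard

section

variable {V : Type*} {G : SimpleGraph V}

theorem ProperLabeling.chromaticNumber_le_ncard_range {ℓ : V → ℤ} (hℓ : ProperLabeling G ℓ)
    (hfin : (Set.range ℓ).Finite) : G.chromaticNumber ≤ (Set.range ℓ).ncard := by
  have : Fintype (Set.range ℓ) := hfin.fintype
  let C : G.Coloring (Set.range ℓ) :=
    Coloring.mk (Set.rangeFactorization ℓ) fun hvw h => hℓ hvw (congrArg Subtype.val h)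
  simpa only [← Nat.card_eq_fintype_card, Nat.card_coe_set_eq] using C.colorable.chromaticNumber_le

theorem ProperLabeling.comp_coloring {α : Type*} (C : G.Coloring α) {g : α → ℤ}
    (hg : Function.Injective g) : ProperLabeling G (g ∘ C) :=
  fun _ _ hvw h => C.valid hvw (hg h)

theorem closedColoring_zero_of_forall_dvd [G.LocallyFinite] {n : ℤ} {ℓ : V → ℤ}
    (h : ∀ v, n ∣ ℓ v) : ClosedColoring G n 0 ℓ := fun v =>
  Int.modEq_zero_iff_dvd.mpr <| dvd_add (h v) <| Finset.dvd_sum fun u _ => h u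

theorem ncard_range_comp_le {α β : Type*} [Finite α] (C : V → α) (g : α → β) :
    (Set.range (g ∘ C)).ncard ≤ Nat.card α :=
  calc (Set.range (g ∘ C)).ncard ≤ (Set.range g).ncard :=
        Set.ncard_le_ncard (Set.range_comp_subset_range C g) (Set.finite_range g)
    _ ≤ Nat.card α := by
        rw [← Nat.card_coe_set_eq]; exact Finite.card_range_le g

end

theorem chi_n_zero_eq_chi {V : Type*} (G : SimpleGraph V) [G.LocallyFinite]
    (n : ℕ) (hn : 0 < n) (c : ℕ) (hc : G.chromaticNumber = c) :
    HasClosedChrom G n 0 c := by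
  have lower : ∀ ℓ : V → ℤ, ProperLabeling G ℓ → (Set.range ℓ).Finite →
      c ≤ (Set.range ℓ).ncard := fun ℓ hℓ hfin => by
    exact_mod_cast hc ▸ hℓ.chromaticNumber_le_ncard_range hfin
  obtain ⟨C⟩ : G.Colorable c := chromaticNumber_le_iff_colorable.mp hc.le
  have hn0 : (n : ℤ) ≠ 0 := by exact_mod_cast hn.ne'
  let g : Fin c → ℤ := fun i => n * (i : ℕ)
  have hg : Function.Injective g :=
    (mul_right_injective₀ hn0).comp (Nat.cast_injective.comp Fin.val_injective)
  have hproper := ProperLabeling.comp_coloring C hg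
  have hfin : (Set.range (g ∘ C)).Finite :=
    (Set.finite_range g).subset (Set.range_comp_subset_range C g)
  refine ⟨⟨g ∘ C, hproper, closedColoring_zero_of_forall_dvd fun v => ⟨_, rfl⟩, hfin, ?_⟩,
    fun ℓ hℓ _ hfin => lower ℓ hℓ hfin⟩
  exact le_antisymm ((ncard_range_comp_le C g).trans (Nat.card_fin c).le) (lower _ hproper hfin)
end

section
/- Let k ∈ ℤ, n ∈ ℤ⁺, and let u be an integer whose residue is a unit in ℤ/nℤ. If a proper closed coloring of G with remainder k mod n of minimum order χ_{n,k}(G) exists, then χ_{n,uk}(G) exists and χ_{n,uk}(G) = χ_{n,k}(G). -/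
open SimpleGraph

/-!
Multiplying a labeling by a nonzero integer `a` preserves properness and the number of labels, and
turns a closed coloring with remainder `k` into one with remainder `a * k`. Choosing `a` congruent to
`u`, respectively to `u⁻¹`, modulo `n` transports minimal colorings between the remainders `k` and
`u * k` in both directions.
-/

lemma ZMod.exists_ne_zero_intCast_eq_of_isUnit {n : ℕ} {x : ZMod n} (hx : IsUnit x) :
    ∃ a : ℤ, a ≠ 0 ∧ (a : ZMod n) = x := by
  obtain ⟨a, rfl⟩ := ZMod.intCast_surjective x
  by_cases ha : a = 0
  · subst ha
    -- `0` is a unit only in the zero ring, where `1` works as well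
    have h01 : (0 : ZMod n) = 1 := isUnit_zero_iff.mp (by simpa using hx)
    exact ⟨1, one_ne_zero, by simp [← h01]⟩
  · exact ⟨a, ha, rfl⟩

section Scaling

variable {V : Type*} {ℓ : V → ℤ} {a : ℤ}

lemma ProperLabeling.const_mul {G : SimpleGraph V} (hℓ : ProperLabeling G ℓ) (ha : a ≠ 0) :
    ProperLabeling G fun v => a * ℓ v :=
  fun _ _ hvw h => hℓ hvw (mul_left_cancel₀ ha h)

lemma ClosedColoring.const_mul {G : SimpleGraph V} [G.LocallyFinite] {n k k' : ℤ}
    (hℓ : ClosedColoring G n k ℓ) (hk : a * k ≡ k' [ZMOD n]) :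
    ClosedColoring G n k' fun v => a * ℓ v := by
  intro v
  rw [← Finset.mul_sum, ← mul_add]
  exact ((hℓ v).mul_left a).trans hk

lemma Set.Finite.range_const_mul (hℓ : (Set.range ℓ).Finite) :
    (Set.range fun v => a * ℓ v).Finite := by
  rw [← Function.comp_def, Set.range_comp]
  exact hℓ.image _

lemma Set.ncard_range_const_mul (ha : a ≠ 0) :
    (Set.range fun v => a * ℓ v).ncard = (Set.range ℓ).ncard := by
  rw [← Function.comp_def, Set.range_comp]
  exact Set.ncard_image_of_injective _ (mul_right_injective₀ ha)

lemma HasClosedChrom.of_const_mul {G : SimpleGraph V} [G.LocallyFinite] {n k k' : ℤ} {c : ℕ}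
    (h : HasClosedChrom G n k c) {b : ℤ} (ha : a ≠ 0) (hb : b ≠ 0)
    (hk : a * k ≡ k' [ZMOD n]) (hk' : b * k' ≡ k [ZMOD n]) :
    HasClosedChrom G n k' c := by
  obtain ⟨⟨ℓ, hproper, hclosed, hfinite, hcard⟩, hmin⟩ := h
  refine ⟨⟨fun v => a * ℓ v, hproper.const_mul ha, hclosed.const_mul hk,
    hfinite.range_const_mul, (Set.ncard_range_const_mul ha).trans hcard⟩, ?_⟩
  intro ℓ' hproper' hclosed' hfinite'
  rw [← Set.ncard_range_const_mul hb]
  exact hmin _ (hproper'.const_mul hb) (hclosed'.const_mul hk') hfinite'.range_const_mul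

end Scaling

theorem chi_unit_mul_general {V : Type*} (G : SimpleGraph V) [G.LocallyFinite]
    (n : ℕ) (k u : ℤ) (hu : IsUnit (u : ZMod n)) (c : ℕ)
    (h : HasClosedChrom G n k c) :
    HasClosedChrom G n (u * k) c := by
  obtain ⟨a, ha, hau⟩ := ZMod.exists_ne_zero_intCast_eq_of_isUnit hu
  obtain ⟨b, hb, hbu⟩ := ZMod.exists_ne_zero_intCast_eq_of_isUnit hu.unit⁻¹.isUnit
  refine h.of_const_mul ha hb ?_ ?_ <;> rw [← ZMod.intCast_eq_intCast_iff]
  · rw [Int.cast_mul, Int.cast_mul, hau]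
  · rw [Int.cast_mul, Int.cast_mul, hbu, ← mul_assoc, hu.val_inv_mul, one_mul]

theorem chi_unit_mul {V : Type*} (G : SimpleGraph V) [G.LocallyFinite]
    (n : ℕ) (hn : 0 < n) (k u : ℤ) (hu : IsUnit (u : ZMod n)) (c : ℕ)
    (h : HasClosedChrom G n k c) :
    HasClosedChrom G n (u * k) c :=
  chi_unit_mul_general G n k u hu c h
end

section
/- If χ_{n,k1}(G) and χ_{n,k2}(G) both exist, then χ_{n,k1+k2}(G) exists and χ_{n,k1+k2}(G) ≤ χ_{n,k1}(G) · χ_{n,k2}(G). -/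
open SimpleGraph

/-! Closed colorings with remainders `k₁` and `k₂` add up to one with remainder `k₁ + k₂`, but the
sum of two proper labelings need not be proper. So relabel each vertex by an integer that is
congruent to `ℓ₁ v + ℓ₂ v` modulo `n` and determines the pair `(ℓ₁ v, ℓ₂ v)`, namely the residue
of `ℓ₁ v + ℓ₂ v` in `[0, n)` plus `n` times a code of the pair. The result is proper because `ℓ₁`
is, and it uses at most `c₁ * c₂` labels. -/

theorem ClosedColoring.add {V : Type*} {G : SimpleGraph V} [G.LocallyFinite] {n k₁ k₂ : ℤ}
    {ℓ₁ ℓ₂ : V → ℤ} (h₁ : ClosedColoring G n k₁ ℓ₁) (h₂ : ClosedColoring G n k₂ ℓ₂) :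
    ClosedColoring G n (k₁ + k₂) (ℓ₁ + ℓ₂) := by
  intro v
  simpa only [Pi.add_apply, Finset.sum_add_distrib, add_add_add_comm] using (h₁ v).add (h₂ v)

theorem ClosedColoring.of_modEq {V : Type*} {G : SimpleGraph V} [G.LocallyFinite] {n k : ℤ}
    {ℓ ℓ' : V → ℤ} (h : ClosedColoring G n k ℓ') (hℓ : ∀ v, ℓ v ≡ ℓ' v [ZMOD n]) :
    ClosedColoring G n k ℓ := fun v =>
  ((hℓ v).add (Int.ModEq.sum fun u _ => hℓ u)).trans (h v)

theorem ProperLabeling.of_refines {V : Type*} {G : SimpleGraph V} {ℓ₁ ℓ : V → ℤ}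
    (h : ProperLabeling G ℓ₁) (hℓ : ∀ v w, ℓ v = ℓ w → ℓ₁ v = ℓ₁ w) :
    ProperLabeling G ℓ := fun _ _ hvw heq => h hvw (hℓ _ _ heq)

theorem exists_hasClosedChrom_le_ncard_range {V : Type*} {G : SimpleGraph V} [G.LocallyFinite]
    {n k : ℤ} {ℓ : V → ℤ} (hp : ProperLabeling G ℓ) (hc : ClosedColoring G n k ℓ)
    (hf : (Set.range ℓ).Finite) : ∃ c, HasClosedChrom G n k c ∧ c ≤ (Set.range ℓ).ncard := by
  let S : Set ℕ := {m | ∃ ℓ' : V → ℤ, ProperLabeling G ℓ' ∧ ClosedColoring G n k ℓ' ∧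
    (Set.range ℓ').Finite ∧ (Set.range ℓ').ncard = m}
  have hmem : (Set.range ℓ).ncard ∈ S := ⟨ℓ, hp, hc, hf, rfl⟩
  exact ⟨sInf S,
    ⟨Nat.sInf_mem ⟨_, hmem⟩, fun ℓ' hp' hc' hf' => Nat.sInf_le ⟨ℓ', hp', hc', hf', rfl⟩⟩,
    Nat.sInf_le hmem⟩

def pairLabel (n : ℤ) (p : ℤ × ℤ) : ℤ :=
  (p.1 + p.2) % n + n * (Encodable.encode p : ℤ)

theorem pairLabel_modEq (n : ℤ) (p : ℤ × ℤ) : pairLabel n p ≡ p.1 + p.2 [ZMOD n] := by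
  simp [pairLabel, Int.ModEq]

theorem pairLabel_injective {n : ℤ} (hn : 0 < n) : Function.Injective (pairLabel n) := by
  intro p q h
  have hres : p.1 + p.2 ≡ q.1 + q.2 [ZMOD n] :=
    (pairLabel_modEq n p).symm.trans (h ▸ pairLabel_modEq n q)
  have hcode : n * (Encodable.encode p : ℤ) = n * (Encodable.encode q : ℤ) := by
    unfold pairLabel at h
    rw [hres] at h
    exact add_left_cancel h
  exact Encodable.encode_injective (by exact_mod_cast mul_left_cancel₀ hn.ne' hcode)

theorem range_comp_pair_subset {V α β γ : Type*} (f : α × β → γ) (ℓ₁ : V → α) (ℓ₂ : V → β) :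
    (Set.range fun v => f (ℓ₁ v, ℓ₂ v)) ⊆ f '' (Set.range ℓ₁ ×ˢ Set.range ℓ₂) := by
  rw [Set.range_comp' f fun v => (ℓ₁ v, ℓ₂ v)]
  exact Set.image_mono (Set.range_pair_subset ℓ₁ ℓ₂)

theorem ncard_range_comp_pair_le {V α β γ : Type*} (f : α × β → γ) {ℓ₁ : V → α} {ℓ₂ : V → β}
    (hf₁ : (Set.range ℓ₁).Finite) (hf₂ : (Set.range ℓ₂).Finite) :
    (Set.range fun v => f (ℓ₁ v, ℓ₂ v)).ncard ≤ (Set.range ℓ₁).ncard * (Set.range ℓ₂).ncard :=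
  calc (Set.range fun v => f (ℓ₁ v, ℓ₂ v)).ncard
      ≤ (f '' (Set.range ℓ₁ ×ˢ Set.range ℓ₂)).ncard :=
        Set.ncard_le_ncard (range_comp_pair_subset f ℓ₁ ℓ₂) ((hf₁.prod hf₂).image f)
    _ ≤ (Set.range ℓ₁ ×ˢ Set.range ℓ₂).ncard := Set.ncard_image_le (hf₁.prod hf₂)
    _ = (Set.range ℓ₁).ncard * (Set.range ℓ₂).ncard := Set.ncard_prod

theorem chi_add_le_mul {V : Type*} (G : SimpleGraph V) [G.LocallyFinite]
    (n : ℕ) (hn : 0 < n) (k₁ k₂ : ℤ) (c₁ c₂ : ℕ)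
    (h₁ : HasClosedChrom G n k₁ c₁) (h₂ : HasClosedChrom G n k₂ c₂) :
    ∃ c : ℕ, HasClosedChrom G n (k₁ + k₂) c ∧ c ≤ c₁ * c₂ := by
  obtain ⟨⟨ℓ₁, hp₁, hc₁, hf₁, rfl⟩, -⟩ := h₁
  obtain ⟨⟨ℓ₂, -, hc₂, hf₂, rfl⟩, -⟩ := h₂
  let ℓ : V → ℤ := fun v => pairLabel n (ℓ₁ v, ℓ₂ v)
  have hp : ProperLabeling G ℓ := hp₁.of_refines fun v w h =>
    congrArg Prod.fst (pairLabel_injective (by exact_mod_cast hn) h)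
  have hc : ClosedColoring G n (k₁ + k₂) ℓ :=
    (hc₁.add hc₂).of_modEq fun v => pairLabel_modEq _ _
  have hf : (Set.range ℓ).Finite :=
    ((hf₁.prod hf₂).image _).subset (range_comp_pair_subset _ ℓ₁ ℓ₂)
  obtain ⟨c, hchrom, hle⟩ := exists_hasClosedChrom_le_ncard_range hp hc hf
  exact ⟨c, hchrom, hle.trans (ncard_range_comp_pair_le _ hf₁ hf₂)⟩
end

section
/- Let G have finite chromatic number. If there exists a closed coloring with remainder k mod n of G (not necessarily proper), then there exists a proper one, and moreover χ_{n,k}(G) ≤ n · χ(G). More precisely, if ℓ is any closed coloring with remainder k mod n, then χ_{n,k}(G) ≤ |image of ℓ| · χ(G). -/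
open SimpleGraph

/-!
Fix a proper colouring `C : V → Fin χ` and a closed colouring `t` whose values lie in a window
`[a, a + m)` with `n ∣ m`. Then `v ↦ t v + m * C v` is still a closed colouring, since it agrees
with `t` modulo `n`, and it is proper, since `C v` can be read off from it (the window has length
`m`). It takes at most `|range t| · χ` values. Taking `t = ℓ % n` gives the bound `n · χ`, and
taking `t = ℓ` itself, with a window around its finite range, gives `|range ℓ| · χ`.
-/

theorem Int.eq_of_add_mul_eq_add_mul {a m x y i j : ℤ} (hx : x ∈ Set.Ico a (a + m))
    (hy : y ∈ Set.Ico a (a + m)) (h : x + m * i = y + m * j) : i = j := by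
  obtain ⟨hx₁, hx₂⟩ := hx
  obtain ⟨hy₁, hy₂⟩ := hy
  rcases lt_trichotomy i j with hij | hij | hij
  · nlinarith
  · exact hij
  · nlinarith

theorem Set.Finite.exists_subset_Ico_dvd {s : Set ℤ} (hs : s.Finite) {n : ℤ} (hn : 0 < n) :
    ∃ a m, n ∣ m ∧ s ⊆ Set.Ico a (a + m) := by
  obtain ⟨lo, hlo⟩ := hs.bddBelow
  obtain ⟨hi, hhi⟩ := hs.bddAbove
  refine ⟨lo, n * (hi - lo + 1), dvd_mul_right _ _, fun x hx => ⟨hlo hx, ?_⟩⟩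
  nlinarith [hlo hx, hhi hx]

namespace ClosedColoring

variable {V : Type*} {G : SimpleGraph V} [G.LocallyFinite] {n k : ℤ}

theorem of_modEq_s5 {ℓ ℓ' : V → ℤ} (hℓ : ClosedColoring G n k ℓ) (h : ∀ v, ℓ' v ≡ ℓ v [ZMOD n]) :
    ClosedColoring G n k ℓ' := fun v =>
  ((h v).add (Int.ModEq.sum fun u _ => h u)).trans (hℓ v)

theorem exists_proper_of_mem_Ico {χ : ℕ} (C : G.Coloring (Fin χ)) {t : V → ℤ}
    (ht : ClosedColoring G n k t) {a m : ℤ} (hm : n ∣ m) (hta : ∀ v, t v ∈ Set.Ico a (a + m)) :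
    ∃ ℓ : V → ℤ, ProperLabeling G ℓ ∧ ClosedColoring G n k ℓ ∧ (Set.range ℓ).Finite ∧
      (Set.range ℓ).ncard ≤ (Set.range t).ncard * χ := by
  set f : ℤ × Fin χ → ℤ := fun p => p.1 + m * p.2
  have hrange : Set.range (fun v => f (t v, C v)) ⊆ f '' (Set.range t ×ˢ Set.univ) := by
    rintro _ ⟨v, rfl⟩
    exact ⟨(t v, C v), ⟨⟨v, rfl⟩, trivial⟩, rfl⟩
  have hfin : (Set.range t ×ˢ (Set.univ : Set (Fin χ))).Finite :=
    ((Set.finite_Ico a (a + m)).subset (Set.range_subset_iff.2 hta)).prod Set.finite_univ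
  refine ⟨fun v => f (t v, C v), fun v w hvw heq => C.valid hvw ?_, ?_,
    (hfin.image f).subset hrange, ?_⟩
  · exact Fin.ext (by exact_mod_cast Int.eq_of_add_mul_eq_add_mul (hta v) (hta w) heq)
  · exact ht.of_modEq_s5 fun v =>
      (Int.modEq_iff_dvd.2 (by simpa [f] using hm.mul_right (C v : ℤ))).symm
  · calc (Set.range fun v => f (t v, C v)).ncard
        ≤ (f '' (Set.range t ×ˢ Set.univ)).ncard := Set.ncard_le_ncard hrange (hfin.image f)
      _ ≤ (Set.range t ×ˢ (Set.univ : Set (Fin χ))).ncard := Set.ncard_image_le hfin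
      _ = (Set.range t).ncard * χ := by simp [Set.ncard_prod]

end ClosedColoring

theorem Int.emod_mem_Ico (a : ℤ) {n : ℤ} (hn : 0 < n) : a % n ∈ Set.Ico 0 n :=
  ⟨Int.emod_nonneg a hn.ne', Int.emod_lt_of_pos a hn⟩

theorem Int.ncard_range_emod_le {ι : Type*} (f : ι → ℤ) {n : ℕ} (hn : 0 < n) :
    (Set.range fun i => f i % n).ncard ≤ n :=
  calc (Set.range fun i => f i % n).ncard ≤ (Set.Ico (0 : ℤ) n).ncard :=
        Set.ncard_le_ncard (Set.range_subset_iff.2 fun i =>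
          Int.emod_mem_Ico (f i) (Int.natCast_pos.2 hn)) (Set.finite_Ico _ _)
    _ = n := by simp [← Finset.coe_Ico, Set.ncard_coe_finset]

theorem exists_hasClosedChrom {V : Type*} {G : SimpleGraph V} [G.LocallyFinite] {n k : ℤ}
    (h : ∃ ℓ : V → ℤ, ProperLabeling G ℓ ∧ ClosedColoring G n k ℓ ∧ (Set.range ℓ).Finite) :
    ∃ c, HasClosedChrom G n k c := by
  obtain ⟨ℓ, hp, hc, hf⟩ := h
  let P : Set ℕ := {c | ∃ ℓ : V → ℤ, ProperLabeling G ℓ ∧ ClosedColoring G n k ℓ ∧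
      (Set.range ℓ).Finite ∧ (Set.range ℓ).ncard = c}
  exact ⟨sInf P, Nat.sInf_mem (s := P) ⟨_, ℓ, hp, hc, hf, rfl⟩,
    fun ℓ' hp' hc' hf' => Nat.sInf_le ⟨ℓ', hp', hc', hf', rfl⟩⟩

theorem chi_le_n_mul_chrom {V : Type*} (G : SimpleGraph V) [G.LocallyFinite]
    (n : ℕ) (hn : 0 < n) (k : ℤ) (χ : ℕ) (hχ : G.chromaticNumber = χ)
    (ℓ : V → ℤ) (hℓ : ClosedColoring G n k ℓ) :
    ∃ c : ℕ, HasClosedChrom G n k c ∧ c ≤ n * χ ∧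
      ((Set.range ℓ).Finite → c ≤ (Set.range ℓ).ncard * χ) := by
  obtain ⟨C⟩ : G.Colorable χ := by rw [← chromaticNumber_le_iff_colorable, hχ]
  have hn' : (0 : ℤ) < n := by exact_mod_cast hn
  have hmod : ClosedColoring G n k fun v => ℓ v % n := hℓ.of_modEq_s5 fun v => Int.mod_modEq (ℓ v) n
  obtain ⟨ℓ₀, hp₀, hc₀, hf₀, hcard₀⟩ :=
    hmod.exists_proper_of_mem_Ico C (a := 0) dvd_rfl fun v => by
      simpa using Int.emod_mem_Ico (ℓ v) hn'
  obtain ⟨c, hc⟩ := exists_hasClosedChrom ⟨ℓ₀, hp₀, hc₀, hf₀⟩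
  refine ⟨c, hc, ?_, fun hfin => ?_⟩
  · calc c ≤ (Set.range ℓ₀).ncard := hc.2 ℓ₀ hp₀ hc₀ hf₀
      _ ≤ (Set.range fun v => ℓ v % n).ncard * χ := hcard₀
      _ ≤ n * χ := Nat.mul_le_mul_right _ (Int.ncard_range_emod_le ℓ hn)
  · obtain ⟨a, m, hm, hsub⟩ := hfin.exists_subset_Ico_dvd hn'
    obtain ⟨ℓ₁, hp₁, hc₁, hf₁, hcard₁⟩ := hℓ.exists_proper_of_mem_Ico C hm fun v => hsub ⟨v, rfl⟩
    exact (hc.2 ℓ₁ hp₁ hc₁ hf₁).trans hcard₁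
end

section
/- For all k ∈ ℤ and n, m ∈ ℤ⁺ with k ≢ 0 (mod n), the path graph P_m satisfies χ_{n,k}(P_2) = χ_{n,k}(P_3) = 2, and χ_{n,k}(P_m) = 3 for all m ≥ 4. -/
open SimpleGraph

noncomputable instance (m : ℕ) : (pathGraph m).LocallyFinite :=
  fun _ => (Set.toFinite _).fintype

/-!
An edge forces two labels, and `0, k, 0` works on `P₂` and `P₃`. On a longer path a proper
labeling with two labels must begin `a, b, a, b`; the closed sums `a + b`, `2a + b`, `a + 2b`
at the first three vertices are then all `≡ k`, so `k ≡ 3(a + b) - (2a + b) - (a + 2b) = 0`.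
Three labels suffice: repeating `k, 0, n` with period 3 makes every interior closed sum
`k + n ≡ k`, and choosing the phase according to `m % 3` makes both end sums contain `k`
together with `0` or `n`.
-/
lemma hasClosedChrom_of_exists_le {V : Type*} {G : SimpleGraph V} [G.LocallyFinite]
    {n k : ℤ} {c : ℕ}
    (hex : ∃ ℓ : V → ℤ, ProperLabeling G ℓ ∧ ClosedColoring G n k ℓ ∧
      (Set.range ℓ).Finite ∧ (Set.range ℓ).ncard ≤ c)
    (hlb : ∀ ℓ : V → ℤ, ProperLabeling G ℓ → ClosedColoring G n k ℓ →
      (Set.range ℓ).Finite → c ≤ (Set.range ℓ).ncard) :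
    HasClosedChrom G n k c := by
  obtain ⟨ℓ, hp, hc, hf, hle⟩ := hex
  exact ⟨⟨ℓ, hp, hc, hf, hle.antisymm (hlb ℓ hp hc hf)⟩, hlb⟩

lemma ProperLabeling.two_le_ncard_range {V : Type*} {G : SimpleGraph V} {ℓ : V → ℤ}
    (hp : ProperLabeling G ℓ) (hf : (Set.range ℓ).Finite) {v w : V} (hvw : G.Adj v w) :
    2 ≤ (Set.range ℓ).ncard :=
  (Set.one_lt_ncard_iff hf).2 ⟨ℓ v, ℓ w, ⟨v, rfl⟩, ⟨w, rfl⟩, hp hvw⟩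

lemma ncard_range_le_card {ι α : Type*} {f : ι → α} {s : Finset α} (h : ∀ i, f i ∈ s) :
    (Set.range f).ncard ≤ s.card :=
  calc (Set.range f).ncard ≤ (s : Set α).ncard :=
        Set.ncard_le_ncard (Set.range_subset_iff.2 h) s.finite_toSet
    _ = s.card := Set.ncard_coe_finset s

namespace SimpleGraph.pathGraph

variable {m : ℕ}

lemma neighborFinset_first (hm : 1 < m) :
    (pathGraph m).neighborFinset ⟨0, by omega⟩ = {⟨1, hm⟩} := by
  ext u
  simp only [mem_neighborFinset, pathGraph_adj, Finset.mem_singleton, Fin.ext_iff]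
  omega

lemma neighborFinset_last (hm : 1 < m) :
    (pathGraph m).neighborFinset ⟨m - 1, by omega⟩ = {⟨m - 2, by omega⟩} := by
  ext u
  simp only [mem_neighborFinset, pathGraph_adj, Finset.mem_singleton, Fin.ext_iff]
  omega

lemma neighborFinset_succ {i : ℕ} (hi : i + 2 < m) :
    (pathGraph m).neighborFinset ⟨i + 1, by omega⟩ = {⟨i, by omega⟩, ⟨i + 2, hi⟩} := by
  ext u
  simp only [mem_neighborFinset, pathGraph_adj, Finset.mem_insert, Finset.mem_singleton,
    Fin.ext_iff]
  omega

lemma properLabeling_of_seq (g : ℕ → ℤ) (hg : ∀ i, i + 1 < m → g i ≠ g (i + 1)) :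
    ProperLabeling (pathGraph m) (fun v => g v) := by
  intro v w hvw
  rcases pathGraph_adj.1 hvw with h | h
  · simpa only [← h] using hg v (by omega)
  · simpa only [← h] using (hg w (by omega)).symm

lemma closedColoring_of_seq (hm : 2 ≤ m) {n k : ℤ} (g : ℕ → ℤ)
    (h_first : g 0 + g 1 ≡ k [ZMOD n])
    (h_mid : ∀ i, i + 2 < m → g i + g (i + 1) + g (i + 2) ≡ k [ZMOD n])
    (h_last : g (m - 2) + g (m - 1) ≡ k [ZMOD n]) :
    ClosedColoring (pathGraph m) n k (fun v => g v) := by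
  rintro ⟨v, hv⟩
  rcases v with _ | i
  · simpa [neighborFinset_first hm] using h_first
  · by_cases hi : i + 2 < m
    · rw [neighborFinset_succ hi, Finset.sum_pair (by simp)]
      convert h_mid i hi using 1
      ring
    · have hv_last : (⟨i + 1, hv⟩ : Fin m) = ⟨m - 1, by omega⟩ := Fin.ext (by simp; omega)
      rw [hv_last, neighborFinset_last (by omega), Finset.sum_singleton, add_comm]
      exact h_last

end SimpleGraph.pathGraph

def threePeriodic (a b c : ℤ) (i : ℕ) : ℤ :=
  if i % 3 = 0 then a else if i % 3 = 1 then b else c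

section threePeriodic

variable {a b c : ℤ}

lemma threePeriodic_mem (i : ℕ) : threePeriodic a b c i ∈ ({a, b, c} : Finset ℤ) := by
  unfold threePeriodic
  split_ifs <;> simp

lemma threePeriodic_add_add (i : ℕ) :
    threePeriodic a b c i + threePeriodic a b c (i + 1) + threePeriodic a b c (i + 2) =
      a + b + c := by
  unfold threePeriodic
  rcases (by omega : i % 3 = 0 ∨ i % 3 = 1 ∨ i % 3 = 2) with h | h | h <;>
    simp [Nat.add_mod, h] <;> ring

lemma threePeriodic_ne_succ (hab : a ≠ b) (hbc : b ≠ c) (hca : c ≠ a) (i : ℕ) :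
    threePeriodic a b c i ≠ threePeriodic a b c (i + 1) := by
  unfold threePeriodic
  rcases (by omega : i % 3 = 0 ∨ i % 3 = 1 ∨ i % 3 = 2) with h | h | h <;>
    simp [Nat.add_mod, h, hab, hbc, hca]

end threePeriodic

namespace SimpleGraph.pathGraph

variable {m : ℕ} {n k : ℤ}

lemma exists_labeling_threePeriodic (hm : 2 ≤ m) {a b c : ℤ}
    (hab : a ≠ b) (hbc : b ≠ c) (hca : c ≠ a)
    (h_first : a + b ≡ k [ZMOD n]) (hc : c ≡ 0 [ZMOD n])
    (h_last : threePeriodic a b c (m - 2) + threePeriodic a b c (m - 1) ≡ k [ZMOD n]) :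
    ∃ ℓ : Fin m → ℤ, ProperLabeling (pathGraph m) ℓ ∧ ClosedColoring (pathGraph m) n k ℓ ∧
      (Set.range ℓ).Finite ∧ (Set.range ℓ).ncard ≤ 3 := by
  refine ⟨fun v => threePeriodic a b c v,
    properLabeling_of_seq _ fun i _ => threePeriodic_ne_succ hab hbc hca i,
    closedColoring_of_seq hm _ (by simpa [threePeriodic] using h_first) (fun i _ => ?_) h_last,
    Set.finite_range _,
    (ncard_range_le_card fun v : Fin m => threePeriodic_mem (v : ℕ)).trans Finset.card_le_three⟩
  rw [threePeriodic_add_add]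
  simpa using h_first.add hc

lemma exists_labeling_three (hm : 2 ≤ m) (hn : n ≠ 0) (hk : ¬ n ∣ k) :
    ∃ ℓ : Fin m → ℤ, ProperLabeling (pathGraph m) ℓ ∧ ClosedColoring (pathGraph m) n k ℓ ∧
      (Set.range ℓ).Finite ∧ (Set.range ℓ).ncard ≤ 3 := by
  have hk0 : k ≠ 0 := by rintro rfl; exact hk (dvd_zero n)
  have hnk : n ≠ k := by rintro rfl; exact hk dvd_rfl
  have hn0 : n ≡ 0 [ZMOD n] := Int.modEq_zero_iff_dvd.2 dvd_rfl
  by_cases h3 : m % 3 = 0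
  · refine exists_labeling_threePeriodic hm hk0.symm hnk.symm hn
      (by simp [Int.ModEq.refl]) hn0 ?_
    simp [threePeriodic, show (m - 2) % 3 = 1 by omega, show (m - 1) % 3 = 2 by omega]
  · refine exists_labeling_threePeriodic hm hk0 hn.symm hnk
      (by simp [Int.ModEq.refl]) hn0 ?_
    rcases (by omega : m % 3 = 1 ∨ m % 3 = 2) with h | h
    · simp [threePeriodic, show (m - 2) % 3 = 2 by omega, show (m - 1) % 3 = 0 by omega]
    · simp [threePeriodic, show (m - 2) % 3 = 0 by omega, show (m - 1) % 3 = 1 by omega,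
        Int.ModEq.refl]

lemma exists_labeling_two (hm₂ : 2 ≤ m) (hm₃ : m ≤ 3) (hk : k ≠ 0) :
    ∃ ℓ : Fin m → ℤ, ProperLabeling (pathGraph m) ℓ ∧ ClosedColoring (pathGraph m) n k ℓ ∧
      (Set.range ℓ).Finite ∧ (Set.range ℓ).ncard ≤ 2 := by
  let g : ℕ → ℤ := fun i => if i = 1 then k else 0
  refine ⟨fun v => g v, properLabeling_of_seq g fun i hi => ?_,
    closedColoring_of_seq hm₂ g (by simp [g, Int.ModEq.refl]) (fun i hi => ?_) ?_,
    Set.finite_range _, (ncard_range_le_card (s := {0, k}) fun v => ?_).trans Finset.card_le_two⟩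
  · rcases (by omega : i = 0 ∨ i = 1) with rfl | rfl <;> simp [g, hk, Ne.symm hk]
  · obtain rfl : i = 0 := by omega
    simp [g, Int.ModEq.refl]
  · interval_cases m <;> simp [g, Int.ModEq.refl]
  · by_cases h : (v : ℕ) = 1 <;> simp [g, h]

lemma two_le_ncard_range (hm : 2 ≤ m) {ℓ : Fin m → ℤ} (hp : ProperLabeling (pathGraph m) ℓ)
    (hf : (Set.range ℓ).Finite) : 2 ≤ (Set.range ℓ).ncard :=
  hp.two_le_ncard_range hf (v := ⟨0, by omega⟩) (w := ⟨1, by omega⟩) (pathGraph_adj.2 (.inl rfl))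

lemma three_le_ncard_range (hm : 4 ≤ m) (hk : ¬ n ∣ k) {ℓ : Fin m → ℤ}
    (hp : ProperLabeling (pathGraph m) ℓ) (hc : ClosedColoring (pathGraph m) n k ℓ)
    (hf : (Set.range ℓ).Finite) : 3 ≤ (Set.range ℓ).ncard := by
  set x : ℕ → ℤ := fun i => if h : i < m then ℓ ⟨i, h⟩ else 0
  have hx : ∀ v : Fin m, ℓ v = x v := fun v => by simp [x]
  have hmem : ∀ i, i < m → x i ∈ Set.range ℓ := fun i hi => ⟨⟨i, hi⟩, hx _⟩
  have hne : ∀ i, i + 1 < m → x i ≠ x (i + 1) := fun i hi => by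
    simpa only [hx] using hp (v := ⟨i, by omega⟩) (w := ⟨i + 1, hi⟩) (pathGraph_adj.2 (.inl rfl))
  have h_first : x 0 + x 1 ≡ k [ZMOD n] := by
    simpa [neighborFinset_first (by omega : 1 < m), hx] using hc ⟨0, by omega⟩
  have h_mid : ∀ i, i + 2 < m → x i + x (i + 1) + x (i + 2) ≡ k [ZMOD n] := fun i hi => by
    have hci := hc ⟨i + 1, by omega⟩
    rw [neighborFinset_succ hi, Finset.sum_pair (by simp)] at hci
    simp only [hx] at hci
    convert hci using 1
    ring
  have three_le : ∀ i, i + 2 < m → x (i + 2) ≠ x i → 3 ≤ (Set.range ℓ).ncard :=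
    fun i hi h => (Set.two_lt_ncard_iff hf).2 ⟨x i, x (i + 1), x (i + 2), hmem i (by omega),
      hmem (i + 1) (by omega), hmem (i + 2) hi, hne i (by omega), h.symm, hne (i + 1) hi⟩
  obtain h20 | h20 := ne_or_eq (x 2) (x 0)
  · exact three_le 0 (by omega) h20
  obtain h31 | h31 := ne_or_eq (x 3) (x 1)
  · exact three_le 1 (by omega) h31
  have h_aba := h_mid 0 (by omega)
  have h_bab := h_mid 1 (by omega)
  rw [h20] at h_aba h_bab
  rw [h31] at h_bab
  have h_zero := ((h_first.mul_left 3).sub h_aba).sub h_bab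
  ring_nf at h_zero
  exact absurd (Int.modEq_zero_iff_dvd.1 h_zero.symm) hk

end SimpleGraph.pathGraph

theorem chi_pathGraph (k : ℤ) (n : ℕ) (hn : 0 < n) (hk : ¬ (n : ℤ) ∣ k) :
    HasClosedChrom (pathGraph 2) n k 2 ∧ HasClosedChrom (pathGraph 3) n k 2 ∧
      ∀ m : ℕ, 4 ≤ m → HasClosedChrom (pathGraph m) n k 3 := by
  have hk0 : k ≠ 0 := by rintro rfl; exact hk (dvd_zero _)
  have hn0 : (n : ℤ) ≠ 0 := by exact_mod_cast hn.ne'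
  refine ⟨?_, ?_, fun m hm => ?_⟩
  · exact hasClosedChrom_of_exists_le (pathGraph.exists_labeling_two le_rfl (by norm_num) hk0)
      fun ℓ hp _ hf => pathGraph.two_le_ncard_range le_rfl hp hf
  · exact hasClosedChrom_of_exists_le (pathGraph.exists_labeling_two (by norm_num) le_rfl hk0)
      fun ℓ hp _ hf => pathGraph.two_le_ncard_range (by norm_num) hp hf
  · exact hasClosedChrom_of_exists_le (pathGraph.exists_labeling_three (by omega) hn0 hk)
      fun ℓ hp hc hf => pathGraph.three_le_ncard_range hm hk hp hc hf
end

section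
/- For a path on m ≥ 4 vertices, there is no proper closed coloring with remainder k mod n using only 2 distinct labels when k ≢ 0 (mod n). -/
open SimpleGraph

/-! With only two labels, a proper labeling of a path alternates `a, b, a, b, …`. The closed
neighbourhood sums at the first three vertices are then `a + b`, `2a + b` and `a + 2b`; all are
`≡ k`, so `a ≡ b ≡ 0` and hence `k ≡ a + b ≡ 0 (mod n)`. -/

theorem Set.eq_of_ne_of_ne_of_ncard_eq_two {α : Type*} {s : Set α} {x y z : α}
    (hs : s.ncard = 2) (hx : x ∈ s) (hy : y ∈ s) (hz : z ∈ s) (hxy : x ≠ y) (hyz : y ≠ z) :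
    x = z := by
  obtain ⟨a, b, -, rfl⟩ := Set.ncard_eq_two.mp hs
  simp only [Set.mem_insert_iff, Set.mem_singleton_iff] at hx hy hz
  grind

theorem ProperLabeling.eq_of_adj_of_adj {V : Type*} {G : SimpleGraph V} {ℓ : V → ℤ}
    (hℓ : ProperLabeling G ℓ) (hcard : (Set.range ℓ).ncard = 2) {u v w : V}
    (huv : G.Adj u v) (hvw : G.Adj v w) : ℓ u = ℓ w :=
  Set.eq_of_ne_of_ne_of_ncard_eq_two hcard ⟨u, rfl⟩ ⟨v, rfl⟩ ⟨w, rfl⟩ (hℓ huv) (hℓ hvw)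

namespace ClosedColoring

variable {m : ℕ} {n k : ℤ} {ℓ : Fin m → ℤ}

theorem pathGraph_start (h : ClosedColoring (pathGraph m) n k ℓ) (hm : 1 < m) :
    ℓ ⟨0, by omega⟩ + ℓ ⟨1, hm⟩ ≡ k [ZMOD n] := by
  have hN : (pathGraph m).neighborFinset ⟨0, by omega⟩ = {⟨1, hm⟩} := by
    ext u
    simp only [mem_neighborFinset, pathGraph_adj, Finset.mem_singleton, Fin.ext_iff]
    omega
  simpa only [hN, Finset.sum_singleton] using h ⟨0, by omega⟩

theorem pathGraph_interior (h : ClosedColoring (pathGraph m) n k ℓ) (i : ℕ) (hi : i + 2 < m) :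
    ℓ ⟨i, by omega⟩ + ℓ ⟨i + 1, by omega⟩ + ℓ ⟨i + 2, hi⟩ ≡ k [ZMOD n] := by
  have hN : (pathGraph m).neighborFinset ⟨i + 1, by omega⟩ = {⟨i, by omega⟩, ⟨i + 2, hi⟩} := by
    ext u
    simp only [mem_neighborFinset, pathGraph_adj, Finset.mem_insert, Finset.mem_singleton,
      Fin.ext_iff]
    omega
  have hclosed := h ⟨i + 1, by omega⟩
  rw [hN, Finset.sum_pair (by simp [Fin.ext_iff])] at hclosed
  convert hclosed using 1
  ring

end ClosedColoring

theorem no_two_coloring_path_general (k : ℤ) (n m : ℕ) (hk : ¬ (n : ℤ) ∣ k)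
    (hm : 4 ≤ m) :
    ¬ ∃ ℓ : Fin m → ℤ, ProperLabeling (pathGraph m) ℓ ∧
      ClosedColoring (pathGraph m) n k ℓ ∧ (Set.range ℓ).ncard = 2 := by
  rintro ⟨ℓ, hproper, hclosed, hcard⟩
  have adj (i : ℕ) (hi : i + 1 < m) : (pathGraph m).Adj ⟨i, by omega⟩ ⟨i + 1, hi⟩ := by
    simp [pathGraph_adj]
  have h02 := hproper.eq_of_adj_of_adj hcard (adj 0 (by omega)) (adj 1 (by omega))
  have h13 := hproper.eq_of_adj_of_adj hcard (adj 1 (by omega)) (adj 2 (by omega))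
  have c0 := hclosed.pathGraph_start (by omega)
  have c1 := hclosed.pathGraph_interior 0 (by omega)
  have c2 := hclosed.pathGraph_interior 1 (by omega)
  rw [← h02] at c1 c2
  rw [← h13] at c2
  set a := ℓ ⟨0, by omega⟩
  set b := ℓ ⟨1, by omega⟩
  have hk_eq : k = 3 * (k - (a + b)) - (k - (a + b + a)) - (k - (b + a + b)) := by ring
  exact hk (hk_eq ▸ ((c0.dvd.mul_left 3).sub c1.dvd).sub c2.dvd)

theorem no_two_coloring_path (k : ℤ) (n m : ℕ) (hn : 0 < n) (hk : ¬ (n : ℤ) ∣ k)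
    (hm : 4 ≤ m) :
    ¬ ∃ ℓ : Fin m → ℤ, ProperLabeling (pathGraph m) ℓ ∧
      ClosedColoring (pathGraph m) n k ℓ ∧ (Set.range ℓ).ncard = 2 :=
  no_two_coloring_path_general k n m hk hm
end

section
/- Let m₁, m₂, n be positive integers which are parameters of the caterpillar tree C_{m₁,m₂} (two adjacent vertices x, y, with m₁ leaves attached to x and m₂ leaves attached to y), and let M = m₁m₂ − m₁ − m₂. Then C_{m₁,m₂} admits a closed coloring with remainder k mod n if and only if gcd(M, n) divides m₁k (equivalently, gcd(M,n) divides m₂k). -/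
open SimpleGraph

/-- The caterpillar tree `C_{m₁,m₂}`: two adjacent vertices `x = Sum.inl none`
and `y = Sum.inr none`, with m₁ leaves attached to x and m₂ leaves attached to y. -/
def caterpillar (m₁ m₂ : ℕ) : SimpleGraph (Option (Fin m₁) ⊕ Option (Fin m₂)) :=
  SimpleGraph.fromRel (fun v w =>
    (v = Sum.inl none ∧ w = Sum.inr none) ∨
    (∃ i, v = Sum.inl none ∧ w = Sum.inl (some i)) ∨
    (∃ j, v = Sum.inr none ∧ w = Sum.inr (some j)))

noncomputable instance (m₁ m₂ : ℕ) : (caterpillar m₁ m₂).LocallyFinite :=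
  fun _ => (Set.toFinite _).fintype

/-!
Modulo `n`, every leaf label is forced: a leaf of `x` carries `k - ℓ x` and a leaf of `y` carries
`k - ℓ y`. So a closed coloring exists iff `a = ℓ x` and `b = ℓ y` can be chosen with
`b ≡ (m₁ - 1) (a - k)` and `a ≡ (m₂ - 1) (b - k)`. Eliminating `a` leaves the single linear
congruence `M (b - k) ≡ m₁ k`, because `(m₁ - 1) (m₂ - 1) - 1 = M`; it is solvable iff
`gcd(M, n) ∣ m₁ k`. Eliminating `b` instead gives the condition with `m₂ k`.
-/

open Finset

theorem Int.exists_mul_modEq_iff_gcd_dvd {a c n : ℤ} :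
    (∃ t, a * t ≡ c [ZMOD n]) ↔ (Int.gcd a n : ℤ) ∣ c := by
  constructor
  · rintro ⟨t, ht⟩
    have hn : (Int.gcd a n : ℤ) ∣ c - a * t := (Int.gcd_dvd_right a n).trans ht.dvd
    have ha : (Int.gcd a n : ℤ) ∣ a * t := (Int.gcd_dvd_left a n).mul_right t
    simpa using dvd_add hn ha
  · rintro ⟨s, rfl⟩
    refine ⟨Int.gcdA a n * s, Int.modEq_iff_dvd.mpr ⟨Int.gcdB a n * s, ?_⟩⟩
    rw [Int.gcd_eq_gcd_ab]
    ring

theorem exists_modEq_pair_iff {n : ℕ} {p q k : ℤ} :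
    (∃ a b : ℤ, b ≡ p * (a - k) [ZMOD n] ∧ a ≡ q * (b - k) [ZMOD n]) ↔
      ∃ t : ℤ, (p * q - 1) * t ≡ (p + 1) * k [ZMOD n] := by
  simp_rw [← ZMod.intCast_eq_intCast_iff]
  push_cast
  constructor
  · rintro ⟨a, b, hb, ha⟩
    exact ⟨b - k, by push_cast; linear_combination -p * ha - hb⟩
  · rintro ⟨t, ht⟩
    exact ⟨q * t, t + k, by push_cast; linear_combination -ht, by push_cast; ring⟩

theorem center_modEq_iff_of_leaves {ι : Type*} [Fintype ι] {n : ℕ} {k a b : ℤ} {f : ι → ℤ}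
    (hleaf : ∀ i, f i + a ≡ k [ZMOD n]) :
    a + (b + ∑ i, f i) ≡ k [ZMOD n] ↔ b ≡ (Fintype.card ι - 1) * (a - k) [ZMOD n] := by
  simp_rw [← ZMod.intCast_eq_intCast_iff] at hleaf ⊢
  push_cast at hleaf ⊢
  have hsum : ∑ i, (f i : ZMod n) = Fintype.card ι * (k - a) := by
    rw [sum_congr rfl fun i _ => eq_sub_of_add_eq (hleaf i), sum_const, card_univ, nsmul_eq_mul]
  constructor <;> intro h
  · linear_combination h - hsum
  · linear_combination h + hsum

section Caterpillar

variable {m₁ m₂ : ℕ}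

theorem neighborFinset_caterpillar_inl_none :
    (caterpillar m₁ m₂).neighborFinset (Sum.inl none) =
      cons (Sum.inr none) (univ.map (Function.Embedding.some.trans Function.Embedding.inl))
        (by simp) := by
  ext ((_ | _) | (_ | _)) <;> rw [mem_neighborFinset] <;> simp [caterpillar]

theorem neighborFinset_caterpillar_inr_none :
    (caterpillar m₁ m₂).neighborFinset (Sum.inr none) =
      cons (Sum.inl none) (univ.map (Function.Embedding.some.trans Function.Embedding.inr))
        (by simp) := by
  ext ((_ | _) | (_ | _)) <;> rw [mem_neighborFinset] <;> simp [caterpillar]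

theorem neighborFinset_caterpillar_inl_some (i : Fin m₁) :
    (caterpillar m₁ m₂).neighborFinset (Sum.inl (some i)) = {Sum.inl none} := by
  ext ((_ | _) | (_ | _)) <;> rw [mem_neighborFinset] <;> simp [caterpillar]

theorem neighborFinset_caterpillar_inr_some (j : Fin m₂) :
    (caterpillar m₁ m₂).neighborFinset (Sum.inr (some j)) = {Sum.inr none} := by
  ext ((_ | _) | (_ | _)) <;> rw [mem_neighborFinset] <;> simp [caterpillar]

theorem closedColoring_caterpillar_iff {n k : ℤ} {ℓ : Option (Fin m₁) ⊕ Option (Fin m₂) → ℤ} :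
    ClosedColoring (caterpillar m₁ m₂) n k ℓ ↔
      ((ℓ (.inl none) + (ℓ (.inr none) + ∑ i, ℓ (.inl (some i))) ≡ k [ZMOD n]) ∧
        ∀ i, ℓ (.inl (some i)) + ℓ (.inl none) ≡ k [ZMOD n]) ∧
      ((ℓ (.inr none) + (ℓ (.inl none) + ∑ j, ℓ (.inr (some j))) ≡ k [ZMOD n]) ∧
        ∀ j, ℓ (.inr (some j)) + ℓ (.inr none) ≡ k [ZMOD n]) := by
  simp only [ClosedColoring, Sum.forall, Option.forall, neighborFinset_caterpillar_inl_none,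
    neighborFinset_caterpillar_inr_none, neighborFinset_caterpillar_inl_some,
    neighborFinset_caterpillar_inr_some, sum_cons, sum_map, sum_singleton]
  rfl

theorem exists_closedColoring_caterpillar_iff {n : ℕ} {k : ℤ} :
    (∃ ℓ, ClosedColoring (caterpillar m₁ m₂) n k ℓ) ↔
      ∃ a b : ℤ, b ≡ (m₁ - 1) * (a - k) [ZMOD n] ∧ a ≡ (m₂ - 1) * (b - k) [ZMOD n] := by
  simp_rw [closedColoring_caterpillar_iff]
  constructor
  · rintro ⟨ℓ, ⟨hx, hleft⟩, hy, hright⟩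
    refine ⟨ℓ (.inl none), ℓ (.inr none), ?_, ?_⟩
    · simpa using (center_modEq_iff_of_leaves hleft).mp hx
    · simpa using (center_modEq_iff_of_leaves hright).mp hy
  · rintro ⟨a, b, hb, ha⟩
    have hleaf (c : ℤ) : k - c + c ≡ k [ZMOD n] := by rw [sub_add_cancel]
    refine ⟨Sum.elim (Option.elim · a fun _ => k - a) (Option.elim · b fun _ => k - b), ?_⟩
    simp only [Sum.elim_inl, Sum.elim_inr, Option.elim_none, Option.elim_some]
    exact ⟨⟨(center_modEq_iff_of_leaves (f := fun _ : Fin m₁ => k - a) fun _ => hleaf a).mpr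
        (by simpa using hb), fun _ => hleaf a⟩,
      (center_modEq_iff_of_leaves (f := fun _ : Fin m₂ => k - b) fun _ => hleaf b).mpr
        (by simpa using ha), fun _ => hleaf b⟩

end Caterpillar

theorem caterpillar_coloring_exists_iff_general (k : ℤ) (m₁ m₂ n : ℕ) :
    ((∃ ℓ, ClosedColoring (caterpillar m₁ m₂) n k ℓ) ↔
        (Int.gcd ((m₁ : ℤ) * m₂ - m₁ - m₂) n : ℤ) ∣ (m₁ : ℤ) * k) ∧
    ((∃ ℓ, ClosedColoring (caterpillar m₁ m₂) n k ℓ) ↔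
        (Int.gcd ((m₁ : ℤ) * m₂ - m₁ - m₂) n : ℤ) ∣ (m₂ : ℤ) * k) := by
  have hM₁ : ((m₁ : ℤ) - 1) * (m₂ - 1) - 1 = m₁ * m₂ - m₁ - m₂ := by ring
  have hM₂ : ((m₂ : ℤ) - 1) * (m₁ - 1) - 1 = m₁ * m₂ - m₁ - m₂ := by ring
  rw [exists_closedColoring_caterpillar_iff]
  constructor
  · rw [exists_modEq_pair_iff, hM₁, sub_add_cancel, Int.exists_mul_modEq_iff_gcd_dvd]
  · rw [exists_comm]
    simp only [and_comm (b := _ ≡ (m₂ - 1) * _ [ZMOD n])]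
    rw [exists_modEq_pair_iff, hM₂, sub_add_cancel, Int.exists_mul_modEq_iff_gcd_dvd]

theorem caterpillar_coloring_exists_iff (k : ℤ) (m₁ m₂ n : ℕ)
    (hm₁ : 0 < m₁) (hm₂ : 0 < m₂) (hn : 0 < n) :
    ((∃ ℓ, ClosedColoring (caterpillar m₁ m₂) n k ℓ) ↔
        (Int.gcd ((m₁ : ℤ) * m₂ - m₁ - m₂) n : ℤ) ∣ (m₁ : ℤ) * k) ∧
    ((∃ ℓ, ClosedColoring (caterpillar m₁ m₂) n k ℓ) ↔
        (Int.gcd ((m₁ : ℤ) * m₂ - m₁ - m₂) n : ℤ) ∣ (m₂ : ℤ) * k) :=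
  caterpillar_coloring_exists_iff_general k m₁ m₂ n
end

section
/- Let n, m, j be positive integers with 4 | n. If the generalized Petersen graph G(m,j) admits a closed coloring with remainder 1 mod n, then m is even. -/
open SimpleGraph

/-- The generalized Petersen graph G(m,j): exterior vertices `(false, i)` (the `v i`)
and interior vertices `(true, i)` (the `u i`), with edges
`v i — v (i+1)`, `v i — u i`, and `u i — u (i+j)`, indices in ZMod m. -/
def genPetersen (m j : ℕ) : SimpleGraph (Bool × ZMod m) :=
  SimpleGraph.fromRel (fun a b =>
    (a.1 = false ∧ b.1 = false ∧ b.2 = a.2 + 1) ∨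
    (a.1 = false ∧ b.1 = true ∧ b.2 = a.2) ∨
    (a.1 = true ∧ b.1 = true ∧ b.2 = a.2 + (j : ZMod m)))

noncomputable instance (m j : ℕ) [NeZero m] : (genPetersen m j).LocallyFinite :=
  fun _ => (Set.toFinite _).fintype

/-! Summing the closed-neighbourhood congruences over the `2m` vertices of the 3-regular graph
`G(m,j)` counts every label `1 + 3 = 4` times, so `2m ≡ 4 ∑ ℓ (mod n)`; since `4 ∣ n`, `4 ∣ 2m`. -/

namespace SimpleGraph

variable {V : Type*} [Fintype V] {G : SimpleGraph V} [G.LocallyFinite]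

theorem sum_sum_neighborFinset {M : Type*} [AddCommMonoid M] (f : V → M) :
    ∑ v, ∑ u ∈ G.neighborFinset v, f u = ∑ u, G.degree u • f u := by
  rw [Finset.sum_comm' (t' := Finset.univ) (s' := fun u => G.neighborFinset u)
    (by simp [adj_comm])]
  simp only [Finset.sum_const, card_neighborFinset_eq_degree]

theorem IsRegularOfDegree.sum_closedNeighborhood {d : ℕ} (hG : G.IsRegularOfDegree d)
    (ℓ : V → ℤ) :
    ∑ v, (ℓ v + ∑ u ∈ G.neighborFinset v, ℓ u) = (d + 1) * ∑ v, ℓ v := by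
  simp only [Finset.sum_add_distrib, sum_sum_neighborFinset, hG.degree_eq, ← Finset.smul_sum]
  ring

theorem ClosedColoring.card_mul_modEq {n k : ℤ} {ℓ : V → ℤ} (hℓ : ClosedColoring G n k ℓ)
    {d : ℕ} (hG : G.IsRegularOfDegree d) :
    Fintype.card V * k ≡ (d + 1) * ∑ v, ℓ v [ZMOD n] := by
  have := (Int.ModEq.sum (s := Finset.univ) fun v _ => hℓ v).symm
  rwa [hG.sum_closedNeighborhood, Finset.sum_const, Finset.card_univ, nsmul_eq_mul] at this

theorem ClosedColoring.dvd_card_mul {n k : ℤ} {ℓ : V → ℤ} (hℓ : ClosedColoring G n k ℓ)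
    {d : ℕ} (hG : G.IsRegularOfDegree d) (hdn : (d + 1 : ℤ) ∣ n) :
    (d + 1 : ℤ) ∣ Fintype.card V * k := by
  rw [← Int.modEq_zero_iff_dvd]
  exact ((hℓ.card_mul_modEq hG).of_dvd hdn).trans (Int.modEq_zero_iff_dvd.2 (dvd_mul_right _ _))

end SimpleGraph

namespace genPetersen

theorem card_triple_eq_three {R : Type*} [CommRing R] [DecidableEq R] (b : Bool) (i c : R)
    (hc : 2 * c ≠ 0) :
    ({(b, i + c), (b, i - c), (!b, i)} : Finset (Bool × R)).card = 3 := by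
  rw [Finset.card_eq_three]
  refine ⟨_, _, _, ?_, by simp, by simp, rfl⟩
  simp only [ne_eq, Prod.mk.injEq, true_and]
  contrapose! hc
  linear_combination hc

variable {m j : ℕ} [NeZero m]

theorem neighborFinset_outer (h1 : (1 : ZMod m) ≠ 0) (i : ZMod m) :
    (genPetersen m j).neighborFinset (false, i) = {(false, i + 1), (false, i - 1), (true, i)} := by
  ext ⟨b, y⟩
  rw [SimpleGraph.mem_neighborFinset]
  cases b <;> grind [genPetersen, fromRel_adj]

theorem neighborFinset_inner (hj : (j : ZMod m) ≠ 0) (i : ZMod m) :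
    (genPetersen m j).neighborFinset (true, i) =
      {(true, i + (j : ZMod m)), (true, i - (j : ZMod m)), (false, i)} := by
  ext ⟨b, y⟩
  rw [SimpleGraph.mem_neighborFinset]
  cases b <;> grind [genPetersen, fromRel_adj]

theorem isRegularOfDegree_three (hj : 1 ≤ j) (hjm : 2 * j < m) :
    (genPetersen m j).IsRegularOfDegree 3 := by
  have two_mul_ne_zero {a : ℕ} (ha : 0 < a) (h : 2 * a < m) : 2 * (a : ZMod m) ≠ 0 := by
    exact_mod_cast (ZMod.natCast_eq_zero_iff _ m).not.2 (Nat.not_dvd_of_pos_of_lt (by omega) h)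
  have h2 : 2 * (1 : ZMod m) ≠ 0 := by exact_mod_cast two_mul_ne_zero one_pos (by omega)
  have h2j := two_mul_ne_zero hj hjm
  rintro ⟨_ | _, i⟩
  · rw [degree, neighborFinset_outer (right_ne_zero_of_mul h2) i]
    exact card_triple_eq_three false i 1 h2
  · rw [degree, neighborFinset_inner (right_ne_zero_of_mul h2j) i]
    exact card_triple_eq_three true i _ h2j

end genPetersen

theorem genPetersen_remainder_one_even_general (m j n : ℕ) [NeZero m]
    (hj : 1 ≤ j) (hjm : 2 * j < m) (h4n : 4 ∣ n)
    (h : ∃ ℓ, ClosedColoring (genPetersen m j) n 1 ℓ) :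
    Even m := by
  obtain ⟨ℓ, hℓ⟩ := h
  have h4 : (4 : ℤ) ∣ 2 * m := by
    simpa [ZMod.card] using hℓ.dvd_card_mul (genPetersen.isRegularOfDegree_three hj hjm)
      (by exact_mod_cast h4n)
  rw [Nat.even_iff]
  omega

theorem genPetersen_remainder_one_even (m j n : ℕ) [NeZero m]
    (hm : 3 ≤ m) (hj : 1 ≤ j) (hjm : 2 * j < m) (h4n : 4 ∣ n)
    (h : ∃ ℓ, ClosedColoring (genPetersen m j) n 1 ℓ) :
    Even m :=
  genPetersen_remainder_one_even_general m j n hj hjm h4n h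
end
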